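/- Let B be an R-bilinear antisymmetric biderivation of D with values in I(P,R). Then there exists a map σ, assigning to each pair x < y in P an element σ(x,y) ∈ R and constant on chains, such that for all f, g ∈ D: B(f,g)(x,x) = 0 for all x ∈ P, and B(f,g)(x,y) = σ(x,y)·[f,g](x,y) for all x < y in P. -/

import Mathlib

/-- The element `e_{xy}` of the incidence algebra: value `1` at `(x, y)` and `0` elsewhere. -/
def esingle (R : Type*) {P : Type*} [CommRing R] [PartialOrder P] [DecidableEq P]
    {x y : P} (_h : x ≤ y) : IncidenceAlgebra R P :=
  ⟨fun u v => if u = x ∧ v = y then 1 else 0, fun u v huv => by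
    try dsimp only
    split_ifs with h'
    · obtain ⟨rfl, rfl⟩ := h'
      exact absurd _h huv
    · rfl⟩

/-- `D`: the `R`-span of the elements `e_{xy}`, `x ≤ y`, i.e. the finitely supported elements of
the incidence algebra. -/
def Dspan (R P : Type*) [CommRing R] [PartialOrder P] [DecidableEq P] :
    Submodule R (IncidenceAlgebra R P) :=
  Submodule.span R {f : IncidenceAlgebra R P | ∃ (x y : P) (h : x ≤ y), f = esingle R h}

/-!
Write `σ(x, y)` for the `(x, y)`-entry of `B(e_xx, e_xy)`. The Leibniz rules applied to products
of matrix units give `B(e_ww, e_xy) = (δ_wx - δ_wy) σ(x, y) e_xy` and `σ(x, z) = σ(x, y) = σ(y, z)`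
for `x < y < z`; the latter makes `σ` constant on chains. For such `σ`, the map
`(f, g) ↦ σ ⊙ [f, g]` (multiply the entries above the diagonal by `σ`, kill the diagonal) is again
an antisymmetric biderivation with the same `σ`, so the difference `B'` of the two is an
antisymmetric biderivation vanishing on all pairs `(e_ww, e_xy)`. Then
`B'(e_xy, e_uv) = e_xx B'(e_xy, e_uv) e_yy = e_uu B'(e_xy, e_uv) e_vv` lies in `R e_xy ∩ R e_uv`,
which is zero unless the two units coincide, where antisymmetry applies; by bilinearity `B' = 0`
on `D`.
-/

open IncidenceAlgebra Finset

lemma apply_eq_apply_of_isChain {α β : Type*} [PartialOrder α] {σ : α → α → β}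
    (hl : ∀ ⦃x y z⦄, x < y → y < z → σ x z = σ x y)
    (hr : ∀ ⦃x y z⦄, x < y → y < z → σ x z = σ y z)
    {x y u v : α} (hxy : x < y) (huv : u < v) (hc : IsChain (· ≤ ·) ({x, y, u, v} : Set α)) :
    σ x y = σ u v := by
  have extend_right {a b c : α} (hab : a < b) (hbc : b ≤ c) : σ a b = σ a c := by
    obtain rfl | hbc := hbc.eq_or_lt
    exacts [rfl, (hl hab hbc).symm]
  have extend_left {a b c : α} (hab : a ≤ b) (hbc : b < c) : σ a c = σ b c := by
    obtain rfl | hab := hab.eq_or_lt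
    exacts [rfl, hr hab hbc]
  have of_le {a b c d : α} (hab : a < b) (hcd : c < d) (hac : a ≤ c) (hbd : b ≤ d ∨ d ≤ b) :
      σ a b = σ c d := by
    rcases hbd with hbd | hdb
    · exact (extend_right hab hbd).trans (extend_left hac hcd)
    · exact (extend_left hac (hcd.trans_le hdb)).trans (extend_right hcd hdb).symm
  have hyv := hc.total (by simp : y ∈ _) (by simp : v ∈ _)
  rcases hc.total (by simp : x ∈ _) (by simp : u ∈ _) with hxu | hux
  · exact of_le hxy huv hxu hyv
  · exact (of_le huv hxy hux hyv.symm).symm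

structure IsBilinearOn {R A : Type*} [Semiring R] [AddCommGroup A] [Module R A]
    (D : Submodule R A) (B : A → A → A) : Prop where
  add_left : ∀ f g h, f ∈ D → g ∈ D → h ∈ D → B (f + g) h = B f h + B g h
  add_right : ∀ f g h, f ∈ D → g ∈ D → h ∈ D → B f (g + h) = B f g + B f h
  smul_left : ∀ (r : R) (f h), f ∈ D → h ∈ D → B (r • f) h = r • B f h
  smul_right : ∀ (r : R) (f h), f ∈ D → h ∈ D → B f (r • h) = r • B f h

structure IsSkewBiderivationOn {R A : Type*} [Semiring R] [Ring A] [Module R A]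
    (D : Submodule R A) (B : A → A → A) : Prop extends IsBilinearOn D B where
  mul_left : ∀ f g h, f ∈ D → g ∈ D → h ∈ D → B (f * g) h = B f h * g + f * B g h
  mul_right : ∀ f g h, f ∈ D → g ∈ D → h ∈ D → B f (g * h) = B f g * h + g * B f h
  self : ∀ f, f ∈ D → B f f = 0

namespace IsBilinearOn

variable {R A : Type*} [Semiring R] [AddCommGroup A] [Module R A] {D : Submodule R A}
  {B C : A → A → A}

lemma zero_left (hB : IsBilinearOn D B) {g : A} (hg : g ∈ D) : B 0 g = 0 := by
  simpa using hB.smul_left 0 0 g D.zero_mem hg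

lemma zero_right (hB : IsBilinearOn D B) {f : A} (hf : f ∈ D) : B f 0 = 0 := by
  simpa using hB.smul_right 0 f 0 hf D.zero_mem

lemma sub (hB : IsBilinearOn D B) (hC : IsBilinearOn D C) :
    IsBilinearOn D (fun f g => B f g - C f g) where
  add_left f g h hf hg hh := by
    rw [hB.add_left f g h hf hg hh, hC.add_left f g h hf hg hh]; abel
  add_right f g h hf hg hh := by
    rw [hB.add_right f g h hf hg hh, hC.add_right f g h hf hg hh]; abel
  smul_left r f h hf hh := by rw [hB.smul_left r f h hf hh, hC.smul_left r f h hf hh, smul_sub]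
  smul_right r f h hf hh := by
    rw [hB.smul_right r f h hf hh, hC.smul_right r f h hf hh, smul_sub]

lemma eq_zero_of_eq_zero_on_generators {s : Set A} (hB : IsBilinearOn (Submodule.span R s) B)
    (h : ∀ f ∈ s, ∀ g ∈ s, B f g = 0) {f g : A} (hf : f ∈ Submodule.span R s)
    (hg : g ∈ Submodule.span R s) : B f g = 0 := by
  induction hf using Submodule.span_induction with
  | mem f hfs =>
    induction hg using Submodule.span_induction with
    | mem g hgs => exact h f hfs g hgs
    | zero => exact hB.zero_right (Submodule.subset_span hfs)
    | add g g' hg hg' ih ih' =>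
      rw [hB.add_right f g g' (Submodule.subset_span hfs) hg hg', ih, ih', add_zero]
    | smul r g hg ih => rw [hB.smul_right r f g (Submodule.subset_span hfs) hg, ih, smul_zero]
  | zero => exact hB.zero_left hg
  | add f f' hf hf' ih ih' => rw [hB.add_left f f' g hf hf' hg, ih, ih', add_zero]
  | smul r f hf ih => rw [hB.smul_left r f g hf hg, ih, smul_zero]

end IsBilinearOn

namespace IsSkewBiderivationOn

variable {R A : Type*} [Semiring R] [Ring A] [Module R A] {D : Submodule R A}
  {B C : A → A → A}

lemma swap (hB : IsSkewBiderivationOn D B) {f g : A} (hf : f ∈ D) (hg : g ∈ D) :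
    B g f = -B f g := by
  have h := hB.self (f + g) (D.add_mem hf hg)
  rw [hB.add_left f g _ hf hg (D.add_mem hf hg), hB.add_right f f g hf hf hg,
    hB.add_right g f g hg hf hg, hB.self f hf, hB.self g hg, zero_add, add_zero] at h
  exact eq_neg_of_add_eq_zero_right h

lemma sub (hB : IsSkewBiderivationOn D B) (hC : IsSkewBiderivationOn D C) :
    IsSkewBiderivationOn D (fun f g => B f g - C f g) where
  toIsBilinearOn := hB.toIsBilinearOn.sub hC.toIsBilinearOn
  mul_left f g h hf hg hh := by
    rw [hB.mul_left f g h hf hg hh, hC.mul_left f g h hf hg hh, sub_mul, mul_sub]; abel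
  mul_right f g h hf hg hh := by
    rw [hB.mul_right f g h hf hg hh, hC.mul_right f g h hf hg hh, sub_mul, mul_sub]; abel
  self f hf := by rw [hB.self f hf, hC.self f hf, sub_zero]

end IsSkewBiderivationOn

section Esingle

variable {R P : Type*} [CommRing R] [PartialOrder P] [DecidableEq P]

lemma esingle_apply {x y : P} (h : x ≤ y) (a b : P) :
    esingle R h a b = if a = x ∧ b = y then 1 else 0 := rfl

variable (R) in
abbrev ediag (x : P) : IncidenceAlgebra R P :=
  esingle R (le_refl x)

lemma smul_esingle_left_injective {x y : P} (h : x ≤ y) :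
    Function.Injective fun r : R => r • esingle R h := fun r s hrs => by
  simpa [esingle_apply] using congr_fun (DFunLike.congr_fun hrs x) y

lemma esingle_mem_Dspan {x y : P} (h : x ≤ y) : esingle R h ∈ Dspan R P :=
  Submodule.subset_span ⟨x, y, h, rfl⟩

variable [LocallyFiniteOrder P]

lemma esingle_mul_apply {x y : P} (h : x ≤ y) (f : IncidenceAlgebra R P) (a b : P) :
    (esingle R h * f) a b = if a = x then f y b else 0 := by
  rw [mul_apply]
  split_ifs with hax
  · subst hax
    simp only [esingle_apply, true_and, ite_mul, one_mul, zero_mul, sum_ite_eq']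
    exact ite_eq_left_iff.mpr fun hy =>
      (apply_eq_zero_of_not_le (fun hyb => hy (mem_Icc.2 ⟨h, hyb⟩)) f).symm
  · exact sum_eq_zero fun z _ => by rw [esingle_apply, if_neg (by tauto), zero_mul]

lemma mul_esingle_apply {x y : P} (h : x ≤ y) (f : IncidenceAlgebra R P) (a b : P) :
    (f * esingle R h) a b = if b = y then f a x else 0 := by
  rw [mul_apply]
  split_ifs with hby
  · subst hby
    simp only [esingle_apply, and_true, mul_ite, mul_one, mul_zero, sum_ite_eq']
    exact ite_eq_left_iff.mpr fun hx =>
      (apply_eq_zero_of_not_le (fun hax => hx (mem_Icc.2 ⟨hax, h⟩)) f).symm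
  · exact sum_eq_zero fun z _ => by rw [esingle_apply, if_neg (by tauto), mul_zero]

lemma esingle_mul_esingle {x y z : P} (hxy : x ≤ y) (hyz : y ≤ z) :
    esingle R hxy * esingle R hyz = esingle R (hxy.trans hyz) := by
  ext a b _
  rw [esingle_mul_apply]
  by_cases hax : a = x <;> simp [esingle_apply, hax]

lemma esingle_mul_esingle_of_ne {x y u v : P} (hxy : x ≤ y) (huv : u ≤ v) (hyu : y ≠ u) :
    esingle R hxy * esingle R huv = 0 := by
  ext a b _
  rw [esingle_mul_apply]
  simp [esingle_apply, hyu]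

lemma ediag_mul_mul_ediag {x y : P} (h : x ≤ y) (F : IncidenceAlgebra R P) :
    ediag R x * F * ediag R y = F x y • esingle R h := by
  ext a b _
  rw [mul_esingle_apply, esingle_mul_apply]
  by_cases hax : a = x <;> by_cases hby : b = y <;> simp [esingle_apply, hax, hby]

end Esingle

section Biderivation

variable {R P : Type*} [CommRing R] [PartialOrder P] [DecidableEq P]

open Classical in
noncomputable def biderivCoeff
    (B : IncidenceAlgebra R P → IncidenceAlgebra R P → IncidenceAlgebra R P) (x y : P) : R :=
  if h : x ≤ y then B (ediag R x) (esingle R h) x y else 0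

lemma biderivCoeff_sub (B C : IncidenceAlgebra R P → IncidenceAlgebra R P → IncidenceAlgebra R P)
    (x y : P) :
    biderivCoeff (fun f g => B f g - C f g) x y = biderivCoeff B x y - biderivCoeff C x y := by
  unfold biderivCoeff
  split_ifs <;> simp [IncidenceAlgebra.sub_apply]

namespace IsSkewBiderivationOn

variable [LocallyFiniteOrder P]
  {B : IncidenceAlgebra R P → IncidenceAlgebra R P → IncidenceAlgebra R P}

lemma apply_ediag_ediag (hB : IsSkewBiderivationOn (Dspan R P) B) (x u : P) :
    B (ediag R x) (ediag R u) = 0 := by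
  obtain rfl | hxu := eq_or_ne x u
  · exact hB.self _ (esingle_mem_Dspan _)
  have hx := esingle_mem_Dspan (R := R) (le_refl x)
  have hu := esingle_mem_Dspan (R := R) (le_refl u)
  have hcol := hB.mul_right _ _ _ hx hu hx
  have hrow := hB.mul_right _ _ _ hx hx hu
  rw [esingle_mul_esingle_of_ne _ _ hxu.symm, hB.zero_right hx, hB.self _ hx, mul_zero,
    add_zero] at hcol
  rw [esingle_mul_esingle_of_ne _ _ hxu, hB.zero_right hx, hB.self _ hx, zero_mul,
    zero_add] at hrow
  have hsq := hB.mul_left _ _ _ hx hx hu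
  rwa [esingle_mul_esingle, ← hcol, ← hrow, add_zero] at hsq

lemma apply_ediag_esingle (hB : IsSkewBiderivationOn (Dspan R P) B) (w : P) {x y : P}
    (h : x ≤ y) : B (ediag R w) (esingle R h) = B (ediag R w) (esingle R h) x y • esingle R h := by
  have hw := esingle_mem_Dspan (R := R) (le_refl w)
  have he := esingle_mem_Dspan (R := R) h
  have hrow := hB.mul_right _ _ _ hw (esingle_mem_Dspan (le_refl x)) he
  have hcol := hB.mul_right _ _ _ hw he (esingle_mem_Dspan (le_refl y))
  rw [esingle_mul_esingle, hB.apply_ediag_ediag, zero_mul, zero_add] at hrow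
  rw [esingle_mul_esingle, hB.apply_ediag_ediag, mul_zero, add_zero] at hcol
  conv_lhs => rw [hcol, hrow]
  exact ediag_mul_mul_ediag h _

lemma apply_ediag_esingle_of_ne (hB : IsSkewBiderivationOn (Dspan R P) B) {w x y : P}
    (h : x ≤ y) (hwx : w ≠ x) (hwy : w ≠ y) : B (ediag R w) (esingle R h) = 0 := by
  have hw := esingle_mem_Dspan (R := R) (le_refl w)
  have hsq := hB.mul_left _ _ _ hw hw (esingle_mem_Dspan h)
  rw [esingle_mul_esingle] at hsq
  have hxy := congr_fun (DFunLike.congr_fun hsq x) y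
  rw [IncidenceAlgebra.add_apply, mul_esingle_apply, esingle_mul_apply, if_neg hwy.symm,
    if_neg hwx.symm, add_zero] at hxy
  rw [hB.apply_ediag_esingle w h, hxy, zero_smul]

lemma apply_ediag_esingle_left (hB : IsSkewBiderivationOn (Dspan R P) B) {x y : P}
    (h : x ≤ y) : B (ediag R x) (esingle R h) = biderivCoeff B x y • esingle R h := by
  rw [biderivCoeff, dif_pos h]
  exact hB.apply_ediag_esingle x h

lemma apply_ediag_esingle_right (hB : IsSkewBiderivationOn (Dspan R P) B) {x y : P}
    (h : x < y) : B (ediag R y) (esingle R h.le) = -biderivCoeff B x y • esingle R h.le := by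
  have hx := esingle_mem_Dspan (R := R) (le_refl x)
  have hy := esingle_mem_Dspan (R := R) (le_refl y)
  have he := esingle_mem_Dspan (R := R) h.le
  have hd := hB.mul_right _ _ _ he hx hy
  rw [hB.apply_ediag_esingle y h.le]
  -- expanding `B(e_xy, e_xx e_yy) = 0` gives `(σ(x, y) + B(e_yy, e_xy)(x, y)) • e_xy = 0`
  rw [esingle_mul_esingle_of_ne _ _ h.ne, hB.zero_right he, hB.swap hx he, hB.swap hy he,
    hB.apply_ediag_esingle_left h.le, hB.apply_ediag_esingle y h.le, neg_mul, mul_neg,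
    smul_mul_assoc, mul_smul_comm, esingle_mul_esingle, esingle_mul_esingle, ← neg_add,
    ← add_smul, eq_comm, neg_eq_zero, ← zero_smul R (esingle R h.le)] at hd
  rw [eq_neg_of_add_eq_zero_right (smul_esingle_left_injective _ hd)]

lemma biderivCoeff_trans_left (hB : IsSkewBiderivationOn (Dspan R P) B) ⦃x y z : P⦄
    (hxy : x < y) (hyz : y < z) : biderivCoeff B x z = biderivCoeff B x y := by
  have key := hB.mul_right _ _ _ (esingle_mem_Dspan (le_refl x)) (esingle_mem_Dspan hxy.le)
    (esingle_mem_Dspan hyz.le)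
  rw [esingle_mul_esingle, hB.apply_ediag_esingle_left, hB.apply_ediag_esingle_left,
    hB.apply_ediag_esingle_of_ne hyz.le hxy.ne (hxy.trans hyz).ne, mul_zero, add_zero,
    smul_mul_assoc, esingle_mul_esingle] at key
  exact smul_esingle_left_injective _ key

lemma biderivCoeff_trans_right (hB : IsSkewBiderivationOn (Dspan R P) B) ⦃x y z : P⦄
    (hxy : x < y) (hyz : y < z) : biderivCoeff B x z = biderivCoeff B y z := by
  have key := hB.mul_right _ _ _ (esingle_mem_Dspan (le_refl z)) (esingle_mem_Dspan hxy.le)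
    (esingle_mem_Dspan hyz.le)
  rw [esingle_mul_esingle, hB.apply_ediag_esingle_right (hxy.trans hyz),
    hB.apply_ediag_esingle_right hyz,
    hB.apply_ediag_esingle_of_ne hxy.le (hxy.trans hyz).ne' hyz.ne', zero_mul, zero_add,
    mul_smul_comm, esingle_mul_esingle] at key
  exact neg_injective (smul_esingle_left_injective _ key)

lemma apply_ediag_esingle_eq_zero (hB : IsSkewBiderivationOn (Dspan R P) B)
    (h0 : ∀ x y, x < y → biderivCoeff B x y = 0) (w : P) {x y : P} (h : x ≤ y) :
    B (ediag R w) (esingle R h) = 0 := by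
  obtain rfl | hlt := h.eq_or_lt
  · exact hB.apply_ediag_ediag w x
  obtain rfl | hwx := eq_or_ne w x
  · rw [hB.apply_ediag_esingle_left, h0 w y hlt, zero_smul]
  obtain rfl | hwy := eq_or_ne w y
  · rw [hB.apply_ediag_esingle_right hlt, h0 x w hlt, neg_zero, zero_smul]
  exact hB.apply_ediag_esingle_of_ne h hwx hwy

lemma apply_esingle_esingle_eq_zero (hB : IsSkewBiderivationOn (Dspan R P) B)
    (h0 : ∀ w x y (h : x ≤ y), B (ediag R w) (esingle R h) = 0) {x y u v : P} (hxy : x ≤ y)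
    (huv : u ≤ v) : B (esingle R hxy) (esingle R huv) = 0 := by
  have mem {a b : P} (h : a ≤ b) := esingle_mem_Dspan (R := R) h
  have hrow₁ := hB.mul_left _ _ _ (mem (le_refl x)) (mem hxy) (mem huv)
  have hcol₁ := hB.mul_left _ _ _ (mem hxy) (mem (le_refl y)) (mem huv)
  have hrow₂ := hB.mul_right _ _ _ (mem hxy) (mem (le_refl u)) (mem huv)
  have hcol₂ := hB.mul_right _ _ _ (mem hxy) (mem huv) (mem (le_refl v))
  rw [esingle_mul_esingle, h0, zero_mul, zero_add] at hrow₁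
  rw [esingle_mul_esingle, h0, mul_zero, add_zero] at hcol₁
  rw [esingle_mul_esingle, hB.swap (mem (le_refl u)) (mem hxy), h0, neg_zero, zero_mul,
    zero_add] at hrow₂
  rw [esingle_mul_esingle, hB.swap (mem (le_refl v)) (mem hxy), h0, neg_zero, mul_zero,
    add_zero] at hcol₂
  -- so `B(e_xy, e_uv)` is a multiple of both `e_xy` and `e_uv`
  have hsmul_xy := ediag_mul_mul_ediag hxy (B (esingle R hxy) (esingle R huv))
  have hsmul_uv := ediag_mul_mul_ediag huv (B (esingle R hxy) (esingle R huv))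
  rw [← hrow₁, ← hcol₁] at hsmul_xy
  rw [← hrow₂, ← hcol₂] at hsmul_uv
  by_cases heq : x = u ∧ y = v
  · obtain ⟨rfl, rfl⟩ := heq
    exact hB.self _ (mem hxy)
  have hentry := congr_fun (DFunLike.congr_fun hsmul_uv x) y
  rw [constSMul_apply, esingle_apply, if_neg heq, smul_zero] at hentry
  rw [hsmul_xy, hentry, zero_smul]

lemma eq_zero_of_biderivCoeff_eq_zero (hB : IsSkewBiderivationOn (Dspan R P) B)
    (h0 : ∀ x y, x < y → biderivCoeff B x y = 0) {f g : IncidenceAlgebra R P}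
    (hf : f ∈ Dspan R P) (hg : g ∈ Dspan R P) : B f g = 0 := by
  refine hB.eq_zero_of_eq_zero_on_generators ?_ hf hg
  rintro _ ⟨x, y, hxy, rfl⟩ _ ⟨u, v, huv, rfl⟩
  exact hB.apply_esingle_esingle_eq_zero (fun w _ _ h => hB.apply_ediag_esingle_eq_zero h0 w h)
    hxy huv

end IsSkewBiderivationOn

end Biderivation

section StrictMask

variable {R P : Type*} [CommRing R] [PartialOrder P]

open Classical in
noncomputable def strictMask (σ : P → P → R) :
    IncidenceAlgebra R P →ₗ[R] IncidenceAlgebra R P where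
  toFun F :=
    ⟨fun x y => if x < y then σ x y * F x y else 0, fun _ _ h => if_neg fun hlt => h hlt.le⟩
  map_add' F G := by
    ext
    simp only [IncidenceAlgebra.coe_mk, IncidenceAlgebra.add_apply]
    split_ifs <;> ring
  map_smul' r F := by ext; simp [mul_left_comm]

open Classical in
lemma strictMask_apply (σ : P → P → R) (F : IncidenceAlgebra R P) (x y : P) :
    strictMask σ F x y = if x < y then σ x y * F x y else 0 := rfl

variable [LocallyFiniteOrder P]

lemma strictMask_mul {σ : P → P → R} (hσ : ∀ ⦃x y z⦄, x < y → y < z → σ x z = σ x y)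
    {F : IncidenceAlgebra R P} (hF : ∀ x, F x x = 0) (g : IncidenceAlgebra R P) :
    strictMask σ (F * g) = strictMask σ F * g := by
  ext a b hab
  simp only [strictMask_apply, mul_apply]
  split_ifs with hlt
  · rw [mul_sum]
    refine sum_congr rfl fun z hz => ?_
    obtain ⟨haz, hzb⟩ := mem_Icc.1 hz
    obtain rfl | haz := haz.eq_or_lt
    · simp [hF]
    obtain rfl | hzb := hzb.eq_or_lt
    · rw [if_pos haz, mul_assoc]
    · rw [if_pos haz, hσ haz hzb, mul_assoc]
  · refine (sum_eq_zero fun z hz => ?_).symm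
    rw [if_neg fun haz => hlt (haz.trans_le (mem_Icc.1 hz).2), zero_mul]

lemma mul_strictMask {σ : P → P → R} (hσ : ∀ ⦃x y z⦄, x < y → y < z → σ x z = σ y z)
    {F : IncidenceAlgebra R P} (hF : ∀ x, F x x = 0) (f : IncidenceAlgebra R P) :
    strictMask σ (f * F) = f * strictMask σ F := by
  ext a b hab
  simp only [strictMask_apply, mul_apply]
  split_ifs with hlt
  · rw [mul_sum]
    refine sum_congr rfl fun z hz => ?_
    obtain ⟨haz, hzb⟩ := mem_Icc.1 hz
    obtain rfl | hzb := hzb.eq_or_lt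
    · simp [hF]
    obtain rfl | haz := haz.eq_or_lt
    · rw [if_pos hzb, mul_left_comm]
    · rw [if_pos hzb, hσ haz hzb, mul_left_comm]
  · refine (sum_eq_zero fun z hz => ?_).symm
    rw [if_neg fun hzb => hlt ((mem_Icc.1 hz).1.trans_lt hzb), mul_zero]

lemma commutator_apply_self (f g : IncidenceAlgebra R P) (x : P) : (f * g - g * f) x x = 0 := by
  simp [mul_comm]

variable [DecidableEq P]

lemma isSkewBiderivationOn_strictMask_commutator {σ : P → P → R}
    (hl : ∀ ⦃x y z⦄, x < y → y < z → σ x z = σ x y)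
    (hr : ∀ ⦃x y z⦄, x < y → y < z → σ x z = σ y z) (D : Submodule R (IncidenceAlgebra R P)) :
    IsSkewBiderivationOn D fun f g => strictMask σ (f * g - g * f) where
  add_left f g h _ _ _ := by rw [← map_add]; congr 1; noncomm_ring
  add_right f g h _ _ _ := by rw [← map_add]; congr 1; noncomm_ring
  smul_left r f h _ _ := by rw [← map_smul, smul_sub, smul_mul_assoc, mul_smul_comm]
  smul_right r f h _ _ := by rw [← map_smul, smul_sub, smul_mul_assoc, mul_smul_comm]
  mul_left f g h _ _ _ := by
    rw [show f * g * h - h * (f * g) = (f * h - h * f) * g + f * (g * h - h * g) by noncomm_ring,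
      map_add, strictMask_mul hl (commutator_apply_self f h),
      mul_strictMask hr (commutator_apply_self g h)]
  mul_right f g h _ _ _ := by
    rw [show f * (g * h) - g * h * f = (f * g - g * f) * h + g * (f * h - h * f) by noncomm_ring,
      map_add, strictMask_mul hl (commutator_apply_self f g),
      mul_strictMask hr (commutator_apply_self f h)]
  self f _ := by rw [sub_self, map_zero]

lemma biderivCoeff_strictMask_commutator (σ : P → P → R) {x y : P} (h : x < y) :
    biderivCoeff (fun f g => strictMask σ (f * g - g * f)) x y = σ x y := by
  rw [biderivCoeff, dif_pos h.le, strictMask_apply, if_pos h, esingle_mul_esingle,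
    esingle_mul_esingle_of_ne _ _ h.ne', sub_zero]
  simp [esingle_apply]

end StrictMask

/-- Every `R`-bilinear antisymmetric biderivation `B` of `D` with values in
`I(P,R)` is given by a map `σ : P²_< → R` constant on chains via
`B(f,g)(x,x) = 0` and `B(f,g)(x,y) = σ(x,y)[f,g](x,y)` for `x < y`. -/
theorem bider_of_D_eq_sigma_commutator
    {R P : Type*} [CommRing R] [PartialOrder P] [LocallyFiniteOrder P] [DecidableEq P]
    (B : IncidenceAlgebra R P → IncidenceAlgebra R P → IncidenceAlgebra R P)
    (hadd_l : ∀ f g h, f ∈ Dspan R P → g ∈ Dspan R P → h ∈ Dspan R P →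
      B (f + g) h = B f h + B g h)
    (hadd_r : ∀ f g h, f ∈ Dspan R P → g ∈ Dspan R P → h ∈ Dspan R P →
      B f (g + h) = B f g + B f h)
    (hsmul_l : ∀ (r : R) (f h), f ∈ Dspan R P → h ∈ Dspan R P → B (r • f) h = r • B f h)
    (hsmul_r : ∀ (r : R) (f h), f ∈ Dspan R P → h ∈ Dspan R P → B f (r • h) = r • B f h)
    (hder_l : ∀ f g h, f ∈ Dspan R P → g ∈ Dspan R P → h ∈ Dspan R P →
      B (f * g) h = B f h * g + f * B g h)
    (hder_r : ∀ f g h, f ∈ Dspan R P → g ∈ Dspan R P → h ∈ Dspan R P →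
      B f (g * h) = B f g * h + g * B f h)
    (hanti : ∀ f, f ∈ Dspan R P → B f f = 0)
    :
    ∃ σ : P → P → R,
      (∀ x y u v : P, x < y → u < v → IsChain (· ≤ ·) ({x, y, u, v} : Set P) →
        σ x y = σ u v) ∧
      ∀ f g, f ∈ Dspan R P → g ∈ Dspan R P →
        (∀ x : P, B f g x x = 0) ∧
        (∀ x y : P, x < y → B f g x y = σ x y * (f * g - g * f) x y) := by
  have hB : IsSkewBiderivationOn (Dspan R P) B :=
    ⟨⟨hadd_l, hadd_r, hsmul_l, hsmul_r⟩, hder_l, hder_r, hanti⟩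
  have hC := isSkewBiderivationOn_strictMask_commutator hB.biderivCoeff_trans_left
    hB.biderivCoeff_trans_right (Dspan R P)
  have hBC {f g} (hf : f ∈ Dspan R P) (hg : g ∈ Dspan R P) :
      B f g = strictMask (biderivCoeff B) (f * g - g * f) := by
    refine sub_eq_zero.1 ((hB.sub hC).eq_zero_of_biderivCoeff_eq_zero (fun x y hxy => ?_) hf hg)
    rw [biderivCoeff_sub, biderivCoeff_strictMask_commutator _ hxy, sub_self]
  refine ⟨biderivCoeff B, fun _ _ _ _ => apply_eq_apply_of_isChain hB.biderivCoeff_trans_left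
    hB.biderivCoeff_trans_right, fun f g hf hg => ⟨fun x => ?_, fun x y hxy => ?_⟩⟩
  · rw [hBC hf hg, strictMask_apply, if_neg (lt_irrefl x)]
  · rw [hBC hf hg, strictMask_apply, if_pos hxy]
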